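/- arXiv:2507.11269 — 5 statements merged into one kernel-verified Lean document; each statement's English description precedes it below -/
import Mathlib

section
/- Fix a, b ∈ ℝ and probability measures μ₁, μ₀ on ℝ. If the loss function L : ℝ × ℝ → ℝ≥₀ satisfies the loss-difference inequality, and y₁ ↦ L(y₁, a), y₀ ↦ L(y₀, b), and (y₁,y₀) ↦ L(y₁,y₀) are integrable with respect to μ₁, μ₀, and the product measure μ₁ × μ₀ respectively, then ∫ L(y₁, a) dμ₁(y₁) - ∫ L(y₀, b) dμ₀(y₀) ≤ ∫∫ L(y₁, y₀) dμ₀(y₀) dμ₁(y₁) + L(a, b). -/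
open MeasureTheory

/-- Fix `a, b : ℝ` and probability measures `μ₁, μ₀` on `ℝ`. If the loss function
`L : ℝ × ℝ → ℝ≥0` (here, a nonnegative function `ℝ → ℝ → ℝ`) satisfies the
loss-difference inequality `L(x,y) - L(x',y') ≤ L(x,x') + L(y,y')`, and
`y₁ ↦ L(y₁,a)`, `y₀ ↦ L(y₀,b)`, `(y₁,y₀) ↦ L(y₁,y₀)` are integrable w.r.t.
`μ₁`, `μ₀` and `μ₁ × μ₀` respectively, then
`∫ L(y₁,a) dμ₁ - ∫ L(y₀,b) dμ₀ ≤ ∫∫ L(y₁,y₀) dμ₀ dμ₁ + L(a,b)`. -/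
theorem pointwise_causal_bound
    (a b : ℝ) (μ₁ μ₀ : Measure ℝ) [IsProbabilityMeasure μ₁] [IsProbabilityMeasure μ₀]
    (L : ℝ → ℝ → ℝ) (hL0 : ∀ x y, 0 ≤ L x y)
    (hL : ∀ x y x' y', L x y - L x' y' ≤ L x x' + L y y')
    (h₁ : Integrable (fun y₁ => L y₁ a) μ₁)
    (h₀ : Integrable (fun y₀ => L y₀ b) μ₀)
    (h₁₀ : Integrable (fun p : ℝ × ℝ => L p.1 p.2) (μ₁.prod μ₀)) :
    (∫ y₁, L y₁ a ∂μ₁) - (∫ y₀, L y₀ b ∂μ₀)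
      ≤ (∫ y₁, (∫ y₀, L y₁ y₀ ∂μ₀) ∂μ₁) + L a b := by
  have hI : ∀ᵐ y₁ ∂μ₁, Integrable (fun y₀ => L y₁ y₀) μ₀ := h₁₀.prod_right_ae
  have step : ∀ᵐ y₁ ∂μ₁, L y₁ a - ∫ y₀, L y₀ b ∂μ₀
      ≤ (∫ y₀, L y₁ y₀ ∂μ₀) + L a b := by
    filter_upwards [hI] with y₁ hy₁
    have h1 : Integrable (fun y₀ => L y₁ a - L y₀ b) μ₀ := (integrable_const _).sub h₀
    have h2 : Integrable (fun y₀ => L y₁ y₀ + L a b) μ₀ := hy₁.add (integrable_const _)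
    have := integral_mono h1 h2 (fun y₀ => hL y₁ a y₀ b)
    simpa [integral_sub (integrable_const _) h₀, integral_add hy₁ (integrable_const _)]
      using this
  have key := integral_mono_ae (h₁.sub (integrable_const _))
    ((h₁₀.integral_prod_left).add (integrable_const _)) step
  simp only [Pi.sub_apply, Pi.add_apply] at key
  simpa [integral_sub h₁ (integrable_const _),
    integral_add h₁₀.integral_prod_left (integrable_const _)] using key
end

section
/- (SUFT causal bound, binary treatment case.) If the loss function L satisfies the loss-difference inequality and all the integrands defining ε_F, ε_CF, ψ, and δ are integrable with respect to the relevant measures, then the expected factual outcome loss is bounded by the expected counterfactual outcome loss plus the estimated treatment effect loss plus the hypothesis-independent constant: ε_F ≤ ε_CF + ψ + δ. -/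
open MeasureTheory ProbabilityTheory

lemma suft_key (μ ν : Measure ℝ) [IsProbabilityMeasure μ] [IsProbabilityMeasure ν]
    (L : ℝ → ℝ → ℝ)
    (hL : ∀ x y x' y', L x y - L x' y' ≤ L x x' + L y y')
    (a b : ℝ)
    (h1 : Integrable (fun y => L y a) μ) (h0 : Integrable (fun y => L y b) ν)
    (hp : Integrable (fun p : ℝ × ℝ => L p.1 p.2) (μ.prod ν)) :
    ∫ y, L y a ∂μ ≤ ∫ y, L y b ∂ν + L a b + ∫ y₁, (∫ y₀, L y₁ y₀ ∂ν) ∂μ := by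
  have hfae : ∀ᵐ y₁ ∂μ, Integrable (fun y₀ => L y₁ y₀) ν := hp.prod_right_ae
  have hfint : Integrable (fun y₁ => ∫ y₀, L y₁ y₀ ∂ν) μ := hp.integral_prod_left
  have step : ∫ y, L y a ∂μ
      ≤ ∫ y₁, ((∫ y₀, L y₀ b ∂ν) + L a b + ∫ y₀, L y₁ y₀ ∂ν) ∂μ := by
    refine integral_mono_ae h1 (((integrable_const _).add (integrable_const _)).add hfint) ?_
    filter_upwards [hfae] with y₁ hy₁
    have : L y₁ a = ∫ _ : ℝ, L y₁ a ∂ν := by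
      simp [integral_const]
    rw [this]
    have hle : ∫ (_ : ℝ), L y₁ a ∂ν ≤ ∫ y₀, (L y₀ b + L a b + L y₁ y₀) ∂ν := by
      have hadd : Integrable (fun y₀ => L y₀ b + L a b + L y₁ y₀) ν :=
        (h0.add (integrable_const _)).add hy₁
      refine integral_mono (integrable_const _) hadd ?_
      intro y₀
      have := hL y₁ a y₀ b
      -- L y₁ a - L y₀ b ≤ L y₁ y₀ + L a b
      simp only
      linarith
    refine hle.trans_eq ?_
    have hadd : Integrable (fun y₀ => L y₀ b + L a b) ν := h0.add (integrable_const _)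
    rw [integral_add hadd hy₁, integral_add h0 (integrable_const _)]
    simp [integral_const]
  refine step.trans_eq ?_
  have hadd : Integrable (fun _ : ℝ => (∫ y₀, L y₀ b ∂ν) + L a b) μ :=
    (integrable_const _).add (integrable_const _)
  rw [integral_add hadd hfint,
    integral_add (μ := μ) (f := fun _ : ℝ => ∫ y₀, L y₀ b ∂ν)
      (g := fun _ : ℝ => L a b) (integrable_const _) (integrable_const _)]
  simp [integral_const]

/-- (SUFT causal bound, binary treatment case.) -/
theorem suft_causal_bound_binary
    {X : Type*} [MeasurableSpace X]
    (P₁ P₀ : Measure X) [IsProbabilityMeasure P₁] [IsProbabilityMeasure P₀]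
    (κ₁ κ₀ : Kernel X ℝ) [IsMarkovKernel κ₁] [IsMarkovKernel κ₀]
    (L : ℝ → ℝ → ℝ) (hL0 : ∀ a b, 0 ≤ L a b)
    (hL : ∀ x y x' y', L x y - L x' y' ≤ L x x' + L y y')
    (φ₁ φ₀ : X → ℝ)
    (q₁ q₀ : ℝ) (hq₁ : 0 ≤ q₁) (hq₀ : 0 ≤ q₀) (hq : q₁ + q₀ = 1)
    (hi₁ : ∀ x, Integrable (fun y => L y (φ₁ x)) (κ₁ x))
    (hi₀ : ∀ x, Integrable (fun y => L y (φ₀ x)) (κ₀ x))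
    (hF₁ : Integrable (fun x => ∫ y, L y (φ₁ x) ∂(κ₁ x)) P₁)
    (hF₀ : Integrable (fun x => ∫ y, L y (φ₀ x) ∂(κ₀ x)) P₀)
    (hCF₁ : Integrable (fun x => ∫ y, L y (φ₁ x) ∂(κ₁ x)) P₀)
    (hCF₀ : Integrable (fun x => ∫ y, L y (φ₀ x) ∂(κ₀ x)) P₁)
    (hψ₁ : Integrable (fun x => L (φ₀ x) (φ₁ x)) P₀)
    (hψ₀ : Integrable (fun x => L (φ₁ x) (φ₀ x)) P₁)
    (hprod₀₁ : ∀ x, Integrable (fun p : ℝ × ℝ => L p.1 p.2) ((κ₀ x).prod (κ₁ x)))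
    (hprod₁₀ : ∀ x, Integrable (fun p : ℝ × ℝ => L p.1 p.2) ((κ₁ x).prod (κ₀ x)))
    (hδ₁ : Integrable (fun x => ∫ y₀, (∫ y₁, L y₀ y₁ ∂(κ₁ x)) ∂(κ₀ x)) P₀)
    (hδ₀ : Integrable (fun x => ∫ y₁, (∫ y₀, L y₁ y₀ ∂(κ₀ x)) ∂(κ₁ x)) P₁) :
    q₁ * (∫ x, (∫ y, L y (φ₁ x) ∂(κ₁ x)) ∂P₁)
      + q₀ * (∫ x, (∫ y, L y (φ₀ x) ∂(κ₀ x)) ∂P₀)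
    ≤ (q₀ * (∫ x, (∫ y, L y (φ₁ x) ∂(κ₁ x)) ∂P₀)
        + q₁ * (∫ x, (∫ y, L y (φ₀ x) ∂(κ₀ x)) ∂P₁))
      + (q₀ * (∫ x, L (φ₀ x) (φ₁ x) ∂P₀)
        + q₁ * (∫ x, L (φ₁ x) (φ₀ x) ∂P₁))
      + (q₀ * (∫ x, (∫ y₀, (∫ y₁, L y₀ y₁ ∂(κ₁ x)) ∂(κ₀ x)) ∂P₀)
        + q₁ * (∫ x, (∫ y₁, (∫ y₀, L y₁ y₀ ∂(κ₀ x)) ∂(κ₁ x)) ∂P₁)) := by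
  have key₁ : ∀ x, ∫ y, L y (φ₁ x) ∂(κ₁ x)
      ≤ ∫ y, L y (φ₀ x) ∂(κ₀ x) + L (φ₁ x) (φ₀ x)
        + ∫ y₁, (∫ y₀, L y₁ y₀ ∂(κ₀ x)) ∂(κ₁ x) := fun x =>
    suft_key (κ₁ x) (κ₀ x) L hL (φ₁ x) (φ₀ x) (hi₁ x) (hi₀ x) (hprod₁₀ x)
  have key₀ : ∀ x, ∫ y, L y (φ₀ x) ∂(κ₀ x)
      ≤ ∫ y, L y (φ₁ x) ∂(κ₁ x) + L (φ₀ x) (φ₁ x)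
        + ∫ y₀, (∫ y₁, L y₀ y₁ ∂(κ₁ x)) ∂(κ₀ x) := fun x =>
    suft_key (κ₀ x) (κ₁ x) L hL (φ₀ x) (φ₁ x) (hi₀ x) (hi₁ x) (hprod₀₁ x)
  have I₁ : ∫ x, (∫ y, L y (φ₁ x) ∂(κ₁ x)) ∂P₁
      ≤ ∫ x, (∫ y, L y (φ₀ x) ∂(κ₀ x)) ∂P₁ + ∫ x, L (φ₁ x) (φ₀ x) ∂P₁
        + ∫ x, (∫ y₁, (∫ y₀, L y₁ y₀ ∂(κ₀ x)) ∂(κ₁ x)) ∂P₁ := by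
    have h1 : Integrable (fun x => ∫ y, L y (φ₀ x) ∂(κ₀ x) + L (φ₁ x) (φ₀ x)) P₁ :=
      hCF₀.add hψ₀
    have h2 : Integrable (fun x => (∫ y, L y (φ₀ x) ∂(κ₀ x) + L (φ₁ x) (φ₀ x))
        + ∫ y₁, (∫ y₀, L y₁ y₀ ∂(κ₀ x)) ∂(κ₁ x)) P₁ := h1.add hδ₀
    have := integral_mono hF₁ h2 key₁
    rwa [integral_add h1 hδ₀, integral_add hCF₀ hψ₀] at this
  have I₀ : ∫ x, (∫ y, L y (φ₀ x) ∂(κ₀ x)) ∂P₀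
      ≤ ∫ x, (∫ y, L y (φ₁ x) ∂(κ₁ x)) ∂P₀ + ∫ x, L (φ₀ x) (φ₁ x) ∂P₀
        + ∫ x, (∫ y₀, (∫ y₁, L y₀ y₁ ∂(κ₁ x)) ∂(κ₀ x)) ∂P₀ := by
    have h1 : Integrable (fun x => ∫ y, L y (φ₁ x) ∂(κ₁ x) + L (φ₀ x) (φ₁ x)) P₀ :=
      hCF₁.add hψ₁
    have h2 : Integrable (fun x => (∫ y, L y (φ₁ x) ∂(κ₁ x) + L (φ₀ x) (φ₁ x))
        + ∫ y₀, (∫ y₁, L y₀ y₁ ∂(κ₁ x)) ∂(κ₀ x)) P₀ := h1.add hδ₁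
    have := integral_mono hF₀ h2 key₀
    rwa [integral_add h1 hδ₁, integral_add hCF₁ hψ₁] at this
  nlinarith [mul_le_mul_of_nonneg_left I₁ hq₁, mul_le_mul_of_nonneg_left I₀ hq₀]
end

section
/- (SUFT causal bound for the L1 loss.) With L(a,b) = |a - b|, and assuming all the integrands defining ε_F, ε_CF, ψ, and δ (with this choice of L) are integrable with respect to the relevant measures, the expected factual outcome loss is bounded by the expected counterfactual outcome loss plus the estimated treatment effect loss plus the constant: ε_F ≤ ε_CF + ψ + δ. -/
open MeasureTheory ProbabilityTheory


lemma suft_aux (μ ν : Measure ℝ) [IsProbabilityMeasure μ] [IsProbabilityMeasure ν]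
    (a b : ℝ)
    (hμ : Integrable (fun y => |y - a|) μ)
    (hν : Integrable (fun y => |y - b|) ν)
    (hprod : Integrable (fun p : ℝ × ℝ => |p.1 - p.2|) (μ.prod ν)) :
    ∫ y, |y - a| ∂μ
      ≤ ∫ y, |y - b| ∂ν + |a - b| + ∫ y₁, (∫ y₀, |y₁ - y₀| ∂ν) ∂μ := by
  have hint : ∀ y₁ : ℝ, Integrable (fun y => |y₁ - y|) ν := by
    intro y₁
    have hg : Integrable (fun y => |y - b| + |y₁ - b|) ν := hν.add (integrable_const _)
    refine Integrable.mono' hg ?_ ?_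
    · exact (measurable_const.sub measurable_id).abs.aestronglyMeasurable
    · filter_upwards with y
      simp only [Real.norm_eq_abs, abs_abs]
      have h := abs_sub_le y₁ b y
      have h2 : |b - y| = |y - b| := abs_sub_comm _ _
      linarith
  have step : ∀ y₁ : ℝ,
      |y₁ - a| ≤ (∫ y₀, |y₁ - y₀| ∂ν) + ((∫ y₀, |y₀ - b| ∂ν) + |b - a|) := by
    intro y₁
    have hg : Integrable (fun y₀ => |y₀ - b| + |b - a|) ν := hν.add (integrable_const _)
    have h1 : |y₁ - a| = ∫ _y₀, |y₁ - a| ∂ν := by simp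
    calc |y₁ - a| = ∫ _y₀, |y₁ - a| ∂ν := h1
      _ ≤ ∫ y₀, (|y₁ - y₀| + (|y₀ - b| + |b - a|)) ∂ν := by
          refine integral_mono (integrable_const _) ((hint y₁).add hg) ?_
          intro y₀
          have ha := abs_sub_le y₁ y₀ a
          have hb := abs_sub_le y₀ b a
          simp only
          linarith
      _ = (∫ y₀, |y₁ - y₀| ∂ν) + ((∫ y₀, |y₀ - b| ∂ν) + |b - a|) := by
          rw [integral_add (hint y₁) hg, integral_add hν (integrable_const _)]
          simp
  have Hpl : Integrable (fun y₁ => ∫ y₀, |y₁ - y₀| ∂ν) μ := hprod.integral_prod_left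
  have hRHS : Integrable
      (fun y₁ => (∫ y₀, |y₁ - y₀| ∂ν) + ((∫ y₀, |y₀ - b| ∂ν) + |b - a|)) μ :=
    Hpl.add (integrable_const _)
  have H := integral_mono hμ hRHS step
  rw [integral_add Hpl (integrable_const _), integral_const] at H
  have hab : |a - b| = |b - a| := abs_sub_comm _ _
  simp only [measure_univ, ENNReal.toReal_one, probReal_univ, one_mul, one_smul, smul_eq_mul] at H
  rw [hab]
  linarith

/-- (SUFT causal bound for the L1 loss.) With `L(a,b) = |a - b|`, and assuming all the
integrands defining `ε_F`, `ε_CF`, `ψ`, and `δ` (with this choice of `L`) are integrable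
with respect to the relevant measures, the expected factual outcome loss is bounded by
the expected counterfactual outcome loss plus the estimated treatment effect loss plus
the constant: `ε_F ≤ ε_CF + ψ + δ`. -/
theorem suft_causal_bound_binary_l1
    {X : Type*} [MeasurableSpace X]
    (P₁ P₀ : Measure X) [IsProbabilityMeasure P₁] [IsProbabilityMeasure P₀]
    (κ₁ κ₀ : Kernel X ℝ) [IsMarkovKernel κ₁] [IsMarkovKernel κ₀]
    (φ₁ φ₀ : X → ℝ)
    (q₁ q₀ : ℝ) (hq₁ : 0 ≤ q₁) (hq₀ : 0 ≤ q₀) (hq : q₁ + q₀ = 1)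
    (hi₁ : ∀ x, Integrable (fun y => |y - φ₁ x|) (κ₁ x))
    (hi₀ : ∀ x, Integrable (fun y => |y - φ₀ x|) (κ₀ x))
    (hF₁ : Integrable (fun x => ∫ y, |y - φ₁ x| ∂(κ₁ x)) P₁)
    (hF₀ : Integrable (fun x => ∫ y, |y - φ₀ x| ∂(κ₀ x)) P₀)
    (hCF₁ : Integrable (fun x => ∫ y, |y - φ₁ x| ∂(κ₁ x)) P₀)
    (hCF₀ : Integrable (fun x => ∫ y, |y - φ₀ x| ∂(κ₀ x)) P₁)
    (hψ₁ : Integrable (fun x => |φ₀ x - φ₁ x|) P₀)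
    (hψ₀ : Integrable (fun x => |φ₁ x - φ₀ x|) P₁)
    (hprod₀₁ : ∀ x, Integrable (fun p : ℝ × ℝ => |p.1 - p.2|) ((κ₀ x).prod (κ₁ x)))
    (hprod₁₀ : ∀ x, Integrable (fun p : ℝ × ℝ => |p.1 - p.2|) ((κ₁ x).prod (κ₀ x)))
    (hδ₁ : Integrable (fun x => ∫ y₀, (∫ y₁, |y₀ - y₁| ∂(κ₁ x)) ∂(κ₀ x)) P₀)
    (hδ₀ : Integrable (fun x => ∫ y₁, (∫ y₀, |y₁ - y₀| ∂(κ₀ x)) ∂(κ₁ x)) P₁) :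
    q₁ * (∫ x, (∫ y, |y - φ₁ x| ∂(κ₁ x)) ∂P₁)
      + q₀ * (∫ x, (∫ y, |y - φ₀ x| ∂(κ₀ x)) ∂P₀)
    ≤ (q₀ * (∫ x, (∫ y, |y - φ₁ x| ∂(κ₁ x)) ∂P₀)
        + q₁ * (∫ x, (∫ y, |y - φ₀ x| ∂(κ₀ x)) ∂P₁))
      + (q₀ * (∫ x, |φ₀ x - φ₁ x| ∂P₀)
        + q₁ * (∫ x, |φ₁ x - φ₀ x| ∂P₁))
      + (q₀ * (∫ x, (∫ y₀, (∫ y₁, |y₀ - y₁| ∂(κ₁ x)) ∂(κ₀ x)) ∂P₀)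
        + q₁ * (∫ x, (∫ y₁, (∫ y₀, |y₁ - y₀| ∂(κ₀ x)) ∂(κ₁ x)) ∂P₁)) := by

  have h1 : ∀ x, (∫ y, |y - φ₁ x| ∂(κ₁ x))
      ≤ (∫ y, |y - φ₀ x| ∂(κ₀ x)) + |φ₁ x - φ₀ x|
        + ∫ y₁, (∫ y₀, |y₁ - y₀| ∂(κ₀ x)) ∂(κ₁ x) :=
    fun x => suft_aux (κ₁ x) (κ₀ x) (φ₁ x) (φ₀ x) (hi₁ x) (hi₀ x) (hprod₁₀ x)
  have h0 : ∀ x, (∫ y, |y - φ₀ x| ∂(κ₀ x))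
      ≤ (∫ y, |y - φ₁ x| ∂(κ₁ x)) + |φ₀ x - φ₁ x|
        + ∫ y₀, (∫ y₁, |y₀ - y₁| ∂(κ₁ x)) ∂(κ₀ x) :=
    fun x => suft_aux (κ₀ x) (κ₁ x) (φ₀ x) (φ₁ x) (hi₀ x) (hi₁ x) (hprod₀₁ x)
  have H1 : (∫ x, (∫ y, |y - φ₁ x| ∂(κ₁ x)) ∂P₁)
      ≤ (∫ x, (∫ y, |y - φ₀ x| ∂(κ₀ x)) ∂P₁) + (∫ x, |φ₁ x - φ₀ x| ∂P₁)
        + (∫ x, (∫ y₁, (∫ y₀, |y₁ - y₀| ∂(κ₀ x)) ∂(κ₁ x)) ∂P₁) := by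
    have hA : Integrable (fun x => (∫ y, |y - φ₀ x| ∂(κ₀ x)) + |φ₁ x - φ₀ x|) P₁ :=
      hCF₀.add hψ₀
    have hB : Integrable (fun x => ((∫ y, |y - φ₀ x| ∂(κ₀ x)) + |φ₁ x - φ₀ x|)
        + ∫ y₁, (∫ y₀, |y₁ - y₀| ∂(κ₀ x)) ∂(κ₁ x)) P₁ := hA.add hδ₀
    have := integral_mono hF₁ hB h1
    rwa [integral_add hA hδ₀, integral_add hCF₀ hψ₀] at this
  have H0 : (∫ x, (∫ y, |y - φ₀ x| ∂(κ₀ x)) ∂P₀)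
      ≤ (∫ x, (∫ y, |y - φ₁ x| ∂(κ₁ x)) ∂P₀) + (∫ x, |φ₀ x - φ₁ x| ∂P₀)
        + (∫ x, (∫ y₀, (∫ y₁, |y₀ - y₁| ∂(κ₁ x)) ∂(κ₀ x)) ∂P₀) := by
    have hA : Integrable (fun x => (∫ y, |y - φ₁ x| ∂(κ₁ x)) + |φ₀ x - φ₁ x|) P₀ :=
      hCF₁.add hψ₁
    have hB : Integrable (fun x => ((∫ y, |y - φ₁ x| ∂(κ₁ x)) + |φ₀ x - φ₁ x|)
        + ∫ y₀, (∫ y₁, |y₀ - y₁| ∂(κ₁ x)) ∂(κ₀ x)) P₀ := hA.add hδ₁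
    have := integral_mono hF₀ hB h0
    rwa [integral_add hA hδ₁, integral_add hCF₁ hψ₁] at this
  have G1 := mul_le_mul_of_nonneg_left H1 hq₁
  have G0 := mul_le_mul_of_nonneg_left H0 hq₀
  nlinarith [G1, G0]
end

section
/- (Weighted binary causal bound with arbitrary nonnegative coefficients.) Let a, b ≥ 0 be arbitrary nonnegative weights (not required to sum to 1). If the loss function L satisfies the loss-difference inequality and all relevant integrands are integrable, then a·E_{x~P₁}[ℓ(x,1)] + b·E_{x~P₀}[ℓ(x,0)] - b·E_{x~P₀}[ℓ(x,1)] - a·E_{x~P₁}[ℓ(x,0)] ≤ b·E_{x~P₀}[L(φ₀(x), φ₁(x))] + a·E_{x~P₁}[L(φ₁(x), φ₀(x))] + b·E_{x~P₀}[E_{y₀~κ₀ x}[E_{y₁~κ₁ x}[L(y₀, y₁)]]] + a·E_{x~P₁}[E_{y₁~κ₁ x}[E_{y₀~κ₀ x}[L(y₁, y₀)]]]. -/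
open MeasureTheory ProbabilityTheory

lemma key_pointwise (μ ν : Measure ℝ) [IsProbabilityMeasure μ] [IsProbabilityMeasure ν]
    (L : ℝ → ℝ → ℝ)
    (hL : ∀ x y x' y', L x y - L x' y' ≤ L x x' + L y y')
    (c d : ℝ)
    (hc : Integrable (fun y => L y c) μ) (hd : Integrable (fun y => L y d) ν)
    (hprod : Integrable (fun p : ℝ × ℝ => L p.1 p.2) (μ.prod ν)) :
    (∫ y, L y c ∂μ) - (∫ y, L y d ∂ν)
      ≤ L c d + ∫ y₁, (∫ y₀, L y₁ y₀ ∂ν) ∂μ := by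
  have hg : Integrable (fun p : ℝ × ℝ => L p.1 c) (μ.prod ν) := by
    simpa using hc.mul_prod (integrable_const (1:ℝ))
  have hh : Integrable (fun p : ℝ × ℝ => L p.2 d) (μ.prod ν) := by
    simpa using (integrable_const (1:ℝ)).mul_prod hd
  have h1 : ∫ p : ℝ × ℝ, L p.1 c ∂(μ.prod ν) = ∫ y, L y c ∂μ := by
    rw [integral_fun_fst (f := fun y => L y c)]; simp
  have h2 : ∫ p : ℝ × ℝ, L p.2 d ∂(μ.prod ν) = ∫ y, L y d ∂ν := by
    rw [integral_fun_snd (f := fun y => L y d)]; simp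
  have h3 : ∫ p : ℝ × ℝ, L p.1 p.2 ∂(μ.prod ν) = ∫ y₁, (∫ y₀, L y₁ y₀ ∂ν) ∂μ :=
    integral_prod _ hprod
  have hmono : ∫ p : ℝ × ℝ, (L p.1 c - L p.2 d) ∂(μ.prod ν)
      ≤ ∫ p : ℝ × ℝ, (L p.1 p.2 + L c d) ∂(μ.prod ν) := by
    refine integral_mono (hg.sub hh) (hprod.add (integrable_const _)) fun p => ?_
    exact hL p.1 c p.2 d
  rw [integral_sub hg hh, integral_add hprod (integrable_const _), h1, h2, h3,
    integral_const] at hmono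
  simp at hmono
  linarith

/-- (Weighted binary causal bound with arbitrary nonnegative coefficients.) Let
`a, b ≥ 0` be arbitrary nonnegative weights (not required to sum to 1). If the loss
function `L` satisfies the loss-difference inequality and all relevant integrands are
integrable, then
`a·E_{x~P₁}[ℓ(x,1)] + b·E_{x~P₀}[ℓ(x,0)] - b·E_{x~P₀}[ℓ(x,1)] - a·E_{x~P₁}[ℓ(x,0)]
  ≤ b·E_{x~P₀}[L(φ₀(x),φ₁(x))] + a·E_{x~P₁}[L(φ₁(x),φ₀(x))]
    + b·E_{x~P₀}[E_{y₀~κ₀ x}[E_{y₁~κ₁ x}[L(y₀,y₁)]]]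
    + a·E_{x~P₁}[E_{y₁~κ₁ x}[E_{y₀~κ₀ x}[L(y₁,y₀)]]]`,
where `ℓ(x,t) = E_{y~κ_t x}[L(y, φ_t(x))]`. -/
theorem weighted_binary_causal_bound
    {X : Type*} [MeasurableSpace X]
    (P₁ P₀ : Measure X) [IsProbabilityMeasure P₁] [IsProbabilityMeasure P₀]
    (κ₁ κ₀ : Kernel X ℝ) [IsMarkovKernel κ₁] [IsMarkovKernel κ₀]
    (L : ℝ → ℝ → ℝ) (hL0 : ∀ u v, 0 ≤ L u v)
    (hL : ∀ x y x' y', L x y - L x' y' ≤ L x x' + L y y')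
    (φ₁ φ₀ : X → ℝ)
    (a b : ℝ) (ha : 0 ≤ a) (hb : 0 ≤ b)
    (hi₁ : ∀ x, Integrable (fun y => L y (φ₁ x)) (κ₁ x))
    (hi₀ : ∀ x, Integrable (fun y => L y (φ₀ x)) (κ₀ x))
    (hF₁ : Integrable (fun x => ∫ y, L y (φ₁ x) ∂(κ₁ x)) P₁)
    (hF₀ : Integrable (fun x => ∫ y, L y (φ₀ x) ∂(κ₀ x)) P₀)
    (hCF₁ : Integrable (fun x => ∫ y, L y (φ₁ x) ∂(κ₁ x)) P₀)
    (hCF₀ : Integrable (fun x => ∫ y, L y (φ₀ x) ∂(κ₀ x)) P₁)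
    (hψ₁ : Integrable (fun x => L (φ₀ x) (φ₁ x)) P₀)
    (hψ₀ : Integrable (fun x => L (φ₁ x) (φ₀ x)) P₁)
    (hprod₀₁ : ∀ x, Integrable (fun p : ℝ × ℝ => L p.1 p.2) ((κ₀ x).prod (κ₁ x)))
    (hprod₁₀ : ∀ x, Integrable (fun p : ℝ × ℝ => L p.1 p.2) ((κ₁ x).prod (κ₀ x)))
    (hδ₁ : Integrable (fun x => ∫ y₀, (∫ y₁, L y₀ y₁ ∂(κ₁ x)) ∂(κ₀ x)) P₀)
    (hδ₀ : Integrable (fun x => ∫ y₁, (∫ y₀, L y₁ y₀ ∂(κ₀ x)) ∂(κ₁ x)) P₁) :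
    a * (∫ x, (∫ y, L y (φ₁ x) ∂(κ₁ x)) ∂P₁)
      + b * (∫ x, (∫ y, L y (φ₀ x) ∂(κ₀ x)) ∂P₀)
      - b * (∫ x, (∫ y, L y (φ₁ x) ∂(κ₁ x)) ∂P₀)
      - a * (∫ x, (∫ y, L y (φ₀ x) ∂(κ₀ x)) ∂P₁)
    ≤ b * (∫ x, L (φ₀ x) (φ₁ x) ∂P₀)
      + a * (∫ x, L (φ₁ x) (φ₀ x) ∂P₁)
      + b * (∫ x, (∫ y₀, (∫ y₁, L y₀ y₁ ∂(κ₁ x)) ∂(κ₀ x)) ∂P₀)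
      + a * (∫ x, (∫ y₁, (∫ y₀, L y₁ y₀ ∂(κ₀ x)) ∂(κ₁ x)) ∂P₁) := by
  have key₁ : ∀ x, (∫ y, L y (φ₁ x) ∂(κ₁ x)) - (∫ y, L y (φ₀ x) ∂(κ₀ x))
      ≤ L (φ₁ x) (φ₀ x) + ∫ y₁, (∫ y₀, L y₁ y₀ ∂(κ₀ x)) ∂(κ₁ x) := fun x =>
    key_pointwise (κ₁ x) (κ₀ x) L hL (φ₁ x) (φ₀ x) (hi₁ x) (hi₀ x) (hprod₁₀ x)
  have key₀ : ∀ x, (∫ y, L y (φ₀ x) ∂(κ₀ x)) - (∫ y, L y (φ₁ x) ∂(κ₁ x))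
      ≤ L (φ₀ x) (φ₁ x) + ∫ y₀, (∫ y₁, L y₀ y₁ ∂(κ₁ x)) ∂(κ₀ x) := fun x =>
    key_pointwise (κ₀ x) (κ₁ x) L hL (φ₀ x) (φ₁ x) (hi₀ x) (hi₁ x) (hprod₀₁ x)
  have int₁ : (∫ x, (∫ y, L y (φ₁ x) ∂(κ₁ x)) ∂P₁) - (∫ x, (∫ y, L y (φ₀ x) ∂(κ₀ x)) ∂P₁)
      ≤ (∫ x, L (φ₁ x) (φ₀ x) ∂P₁) + ∫ x, (∫ y₁, (∫ y₀, L y₁ y₀ ∂(κ₀ x)) ∂(κ₁ x)) ∂P₁ := by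
    rw [← integral_sub hF₁ hCF₀, ← integral_add hψ₀ hδ₀]
    exact integral_mono (hF₁.sub hCF₀) (hψ₀.add hδ₀) key₁
  have int₀ : (∫ x, (∫ y, L y (φ₀ x) ∂(κ₀ x)) ∂P₀) - (∫ x, (∫ y, L y (φ₁ x) ∂(κ₁ x)) ∂P₀)
      ≤ (∫ x, L (φ₀ x) (φ₁ x) ∂P₀) + ∫ x, (∫ y₀, (∫ y₁, L y₀ y₁ ∂(κ₁ x)) ∂(κ₀ x)) ∂P₀ := by
    rw [← integral_sub hF₀ hCF₁, ← integral_add hψ₁ hδ₁]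
    exact integral_mono (hF₀.sub hCF₁) (hψ₁.add hδ₁) key₀
  nlinarith [mul_le_mul_of_nonneg_left int₁ ha, mul_le_mul_of_nonneg_left int₀ hb]
end

section
/- (SUFT causal bound for N control treatments with the L1 loss.) Let N ≥ 1, take L(a,b) = |a - b|, and assume all relevant integrands are integrable. Then q₁·ε¹_F + Σ_{j=2}^{N+1} q_j·εʲ_F ≤ Σ_{j=2}^{N+1} ( q_j·ε^{1,j}_CF + (1/N)·q₁·εʲ_CF + q_j·ψ^{1,j} + (1/N)·q₁·ψʲ + q_j·δ^{1,j} + (1/N)·q₁·δʲ ). -/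
open MeasureTheory ProbabilityTheory

lemma key_pt (μ ν : Measure ℝ) [IsProbabilityMeasure μ] [IsProbabilityMeasure ν] (a b : ℝ)
    (h1 : Integrable (fun y => |y - a|) μ) (h2 : Integrable (fun z => |z - b|) ν)
    (hp : Integrable (fun p : ℝ × ℝ => |p.1 - p.2|) (μ.prod ν)) :
    ∫ y, |y - a| ∂μ ≤ (∫ z, |z - b| ∂ν) + |a - b| + ∫ y, (∫ z, |y - z| ∂ν) ∂μ := by
  have hint : Integrable (fun y => ∫ z, |y - z| ∂ν) μ := hp.integral_prod_left
  have hpt : ∀ y, |y - a| ≤ (∫ z, |y - z| ∂ν) + ((∫ z, |z - b| ∂ν) + |b - a|) := by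
    intro y
    have hz : Integrable (fun z => |y - z|) ν := by
      refine ((integrable_const (|y - b|)).add h2).mono ?_ (ae_of_all _ fun z => ?_)
      · exact (Measurable.abs (measurable_const.sub measurable_id)).aestronglyMeasurable
      · simp only [Real.norm_eq_abs, abs_abs]
        calc |y - z| ≤ |y - b| + |b - z| := abs_sub_le _ _ _
          _ = |y - b| + |z - b| := by rw [abs_sub_comm b z]
          _ ≤ |(|y - b| + |z - b|)| := le_abs_self _
    have : |y - a| = ∫ _, |y - a| ∂ν := by simp
    rw [this]
    calc ∫ _, |y - a| ∂ν ≤ ∫ z, (|y - z| + (|z - b| + |b - a|)) ∂ν := by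
          have hg : Integrable (fun z => |z - b| + |b - a|) ν := h2.add (integrable_const _)
          refine integral_mono (integrable_const _) (hz.add hg) fun z => ?_
          calc |y - a| ≤ |y - z| + |z - a| := abs_sub_le _ _ _
            _ ≤ |y - z| + (|z - b| + |b - a|) := by
                have := abs_sub_le z b a; linarith
      _ = (∫ z, |y - z| ∂ν) + ((∫ z, |z - b| ∂ν) + |b - a|) := by
          have hg : Integrable (fun z => |z - b| + |b - a|) ν := h2.add (integrable_const _)
          rw [integral_add hz hg, integral_add h2 (integrable_const _), integral_const]
          simp
  calc ∫ y, |y - a| ∂μ ≤ ∫ y, ((∫ z, |y - z| ∂ν) + ((∫ z, |z - b| ∂ν) + |b - a|)) ∂μ :=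
        integral_mono h1 (hint.add (integrable_const _)) hpt
    _ = (∫ z, |z - b| ∂ν) + |a - b| + ∫ y, (∫ z, |y - z| ∂ν) ∂μ := by
        rw [integral_add hint (integrable_const _), integral_const]
        simp [abs_sub_comm a b]; ring

lemma key_meas {X : Type*} [MeasurableSpace X] (P : Measure X) [IsProbabilityMeasure P]
    (κs κt : Kernel X ℝ) [IsMarkovKernel κs] [IsMarkovKernel κt] (φs φt : X → ℝ)
    (hIs : ∀ x, Integrable (fun y => |y - φs x|) (κs x))
    (hOt : Integrable (fun x => ∫ y, |y - φt x| ∂(κt x)) P)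
    (hOs : Integrable (fun x => ∫ y, |y - φs x| ∂(κs x)) P)
    (hψ : Integrable (fun x => |φt x - φs x|) P)
    (hIt : ∀ x, Integrable (fun y => |y - φt x|) (κt x))
    (hp : ∀ x, Integrable (fun p : ℝ × ℝ => |p.1 - p.2|) (((κt x)).prod (κs x)))
    (hδ : Integrable (fun x => ∫ y, (∫ z, |y - z| ∂(κs x)) ∂(κt x)) P) :
    ∫ x, (∫ y, |y - φt x| ∂(κt x)) ∂P
      ≤ (∫ x, (∫ y, |y - φs x| ∂(κs x)) ∂P) + (∫ x, |φt x - φs x| ∂P)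
        + ∫ x, (∫ y, (∫ z, |y - z| ∂(κs x)) ∂(κt x)) ∂P := by
  have h := fun x => key_pt (κt x) (κs x) (φt x) (φs x) (hIt x) (hIs x) (hp x)
  calc ∫ x, (∫ y, |y - φt x| ∂(κt x)) ∂P
      ≤ ∫ x, ((∫ y, |y - φs x| ∂(κs x)) + |φt x - φs x|
          + ∫ y, (∫ z, |y - z| ∂(κs x)) ∂(κt x)) ∂P := by
        have hsum : Integrable (fun x => (∫ y, |y - φs x| ∂(κs x)) + |φt x - φs x|) P :=
          hOs.add hψ
        exact integral_mono hOt (hsum.add hδ) fun x => h x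
    _ = _ := by
        have hsum : Integrable (fun x => (∫ y, |y - φs x| ∂(κs x)) + |φt x - φs x|) P :=
          hOs.add hψ
        rw [integral_add hsum hδ, integral_add hOs hψ]

/-- (SUFT causal bound for N control treatments with the L1 loss.) Let `N ≥ 1`, take
`L(a,b) = |a - b|`, and assume all relevant integrands are integrable. Then
`q₁·ε¹_F + Σ_{j=2}^{N+1} q_j·εʲ_F
  ≤ Σ_{j=2}^{N+1} ( q_j·ε^{1,j}_CF + (1/N)·q₁·εʲ_CF + q_j·ψ^{1,j} + (1/N)·q₁·ψʲ
                    + q_j·δ^{1,j} + (1/N)·q₁·δʲ )`. -/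
theorem suft_causal_bound_N_controls_l1
    {X : Type*} [MeasurableSpace X] (N : ℕ) (hN : 1 ≤ N)
    (P : ℕ → Measure X) (κ : ℕ → Kernel X ℝ) (φ : ℕ → X → ℝ) (q : ℕ → ℝ)
    (hP : ∀ t ∈ Finset.Icc 1 (N + 1), IsProbabilityMeasure (P t))
    (hκ : ∀ t ∈ Finset.Icc 1 (N + 1), IsMarkovKernel (κ t))
    (hq : ∀ t ∈ Finset.Icc 1 (N + 1), 0 ≤ q t)
    (hInner : ∀ t ∈ Finset.Icc 1 (N + 1), ∀ x, Integrable (fun y => |y - φ t x|) (κ t x))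
    (hOuter : ∀ s ∈ Finset.Icc 1 (N + 1), ∀ t ∈ Finset.Icc 1 (N + 1),
      Integrable (fun x => ∫ y, |y - φ t x| ∂(κ t x)) (P s))
    (hψ : ∀ s ∈ Finset.Icc 1 (N + 1), ∀ t ∈ Finset.Icc 1 (N + 1),
      Integrable (fun x => |φ s x - φ t x|) (P s))
    (hProd : ∀ s ∈ Finset.Icc 1 (N + 1), ∀ t ∈ Finset.Icc 1 (N + 1), ∀ x,
      Integrable (fun p : ℝ × ℝ => |p.1 - p.2|) (((κ s) x).prod ((κ t) x)))
    (hδ : ∀ s ∈ Finset.Icc 1 (N + 1), ∀ t ∈ Finset.Icc 1 (N + 1),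
      Integrable (fun x => ∫ ys, (∫ yt, |ys - yt| ∂(κ t x)) ∂(κ s x)) (P s)) :
    q 1 * (∫ x, (∫ y, |y - φ 1 x| ∂(κ 1 x)) ∂(P 1))
      + ∑ j ∈ Finset.Icc 2 (N + 1), q j * (∫ x, (∫ y, |y - φ j x| ∂(κ j x)) ∂(P j))
    ≤ ∑ j ∈ Finset.Icc 2 (N + 1),
        (q j * (∫ x, (∫ y, |y - φ 1 x| ∂(κ 1 x)) ∂(P j))
          + (1 / (N : ℝ)) * q 1 * (∫ x, (∫ y, |y - φ j x| ∂(κ j x)) ∂(P 1))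
          + q j * (∫ x, |φ j x - φ 1 x| ∂(P j))
          + (1 / (N : ℝ)) * q 1 * (∫ x, |φ 1 x - φ j x| ∂(P 1))
          + q j * (∫ x, (∫ yj, (∫ y1, |yj - y1| ∂(κ 1 x)) ∂(κ j x)) ∂(P j))
          + (1 / (N : ℝ)) * q 1 * (∫ x, (∫ y1, (∫ yj, |y1 - yj| ∂(κ j x)) ∂(κ 1 x)) ∂(P 1))) := by
  have h1m : 1 ∈ Finset.Icc 1 (N + 1) := by simp
  have hmem : ∀ j ∈ Finset.Icc 2 (N + 1), j ∈ Finset.Icc 1 (N + 1) := by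
    intro j hj
    simp only [Finset.mem_Icc] at *
    omega
  haveI := hP 1 h1m
  haveI := hκ 1 h1m
  have hq1 : 0 ≤ q 1 := hq 1 h1m
  have hcard : (Finset.Icc 2 (N + 1)).card = N := by rw [Nat.card_Icc]; omega
  have hsplit : q 1 * (∫ x, (∫ y, |y - φ 1 x| ∂(κ 1 x)) ∂(P 1))
      = ∑ j ∈ Finset.Icc 2 (N + 1),
          (1 / (N : ℝ)) * q 1 * (∫ x, (∫ y, |y - φ 1 x| ∂(κ 1 x)) ∂(P 1)) := by
    rw [Finset.sum_const, hcard, nsmul_eq_mul]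
    have hN0 : (N : ℝ) ≠ 0 := by positivity
    field_simp
  rw [hsplit, ← Finset.sum_add_distrib]
  refine Finset.sum_le_sum fun j hj => ?_
  have hjm := hmem j hj
  haveI := hP j hjm
  haveI := hκ j hjm
  have hqj : 0 ≤ q j := hq j hjm
  have bj : (∫ x, (∫ y, |y - φ j x| ∂(κ j x)) ∂(P j))
      ≤ (∫ x, (∫ y, |y - φ 1 x| ∂(κ 1 x)) ∂(P j)) + (∫ x, |φ j x - φ 1 x| ∂(P j))
        + ∫ x, (∫ yj, (∫ y1, |yj - y1| ∂(κ 1 x)) ∂(κ j x)) ∂(P j) :=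
    key_meas (P j) (κ 1) (κ j) (φ 1) (φ j) (hInner 1 h1m) (hOuter j hjm j hjm)
      (hOuter j hjm 1 h1m) (hψ j hjm 1 h1m) (hInner j hjm) (hProd j hjm 1 h1m) (hδ j hjm 1 h1m)
  have b1 : (∫ x, (∫ y, |y - φ 1 x| ∂(κ 1 x)) ∂(P 1))
      ≤ (∫ x, (∫ y, |y - φ j x| ∂(κ j x)) ∂(P 1)) + (∫ x, |φ 1 x - φ j x| ∂(P 1))
        + ∫ x, (∫ y1, (∫ yj, |y1 - yj| ∂(κ j x)) ∂(κ 1 x)) ∂(P 1) :=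
    key_meas (P 1) (κ j) (κ 1) (φ j) (φ 1) (hInner j hjm) (hOuter 1 h1m 1 h1m)
      (hOuter 1 h1m j hjm) (hψ 1 h1m j hjm) (hInner 1 h1m) (hProd 1 h1m j hjm) (hδ 1 h1m j hjm)
  have e1 := mul_le_mul_of_nonneg_left b1 (by positivity : (0:ℝ) ≤ 1 / (N : ℝ) * q 1)
  have e2 := mul_le_mul_of_nonneg_left bj hqj
  calc (1 / (N : ℝ)) * q 1 * (∫ x, (∫ y, |y - φ 1 x| ∂(κ 1 x)) ∂(P 1))
        + q j * (∫ x, (∫ y, |y - φ j x| ∂(κ j x)) ∂(P j))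
      ≤ (1 / (N : ℝ)) * q 1 * ((∫ x, (∫ y, |y - φ j x| ∂(κ j x)) ∂(P 1))
            + (∫ x, |φ 1 x - φ j x| ∂(P 1))
            + ∫ x, (∫ y1, (∫ yj, |y1 - yj| ∂(κ j x)) ∂(κ 1 x)) ∂(P 1))
        + q j * ((∫ x, (∫ y, |y - φ 1 x| ∂(κ 1 x)) ∂(P j)) + (∫ x, |φ j x - φ 1 x| ∂(P j))
            + ∫ x, (∫ yj, (∫ y1, |yj - y1| ∂(κ 1 x)) ∂(κ j x)) ∂(P j)) := by
        exact add_le_add e1 e2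
    _ = _ := by ring
end
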